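/- arXiv:1705.08118 — 5 statements merged into one kernel-verified Lean document; each statement's English description precedes it below -/
import Mathlib

section
/- Let ℓ be SELF with representation ℓ(y,y') = ⟨ψ(y), V ψ(y')⟩_H. Then for every measurable function f : X → C (with components f_1,…,f_T), the expected risk admits the characterization E(f) = (1/T) ∫_X Σ_{t=1}^T ⟨ψ(f_t(x)), V g*_t(x)⟩_H dρ(x), where g*_t(x) = ∫_Y ψ(y) dκ_t(x)(y) is the Bochner integral of ψ against the conditional distribution of task t; moreover each g*_t is measurable and x ↦ ‖g*_t(x)‖_H is bounded. -/
open MeasureTheory ProbabilityTheory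

/-- SELF characterization of the multitask expected risk. -/
theorem stmt0
    {X : Type*} [MeasurableSpace X] (ρ : Measure X) [IsProbabilityMeasure ρ]
    (a b : ℝ) (hab : a ≤ b)
    {H : Type*} [NormedAddCommGroup H] [InnerProductSpace ℝ H]
    [CompleteSpace H] [SecondCountableTopology H]
    [MeasurableSpace H] [BorelSpace H]
    (ψ : Set.Icc a b → H) (hψ : Continuous ψ)
    (V : H →L[ℝ] H)
    (ℓ : Set.Icc a b → Set.Icc a b → ℝ)
    (hℓ : ∀ y y', ℓ y y' = (inner ℝ (ψ y) (V (ψ y')) : ℝ))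
    (T : ℕ) (hT : 1 ≤ T)
    (κ : Fin T → Kernel X (Set.Icc a b)) (hκ : ∀ t, IsMarkovKernel (κ t))
    (C : Set (Fin T → Set.Icc a b)) (hCne : C.Nonempty) (hCcomp : IsCompact C)
    (f : X → Fin T → Set.Icc a b) (hf : Measurable f) (hfC : ∀ x, f x ∈ C)
    (gstar : Fin T → X → H)
    (hg : ∀ t x, gstar t x = ∫ y, ψ y ∂((κ t) x)) :
    (1 / (T : ℝ)) * ∑ t, ∫ x, ∫ y, ℓ (f x t) y ∂((κ t) x) ∂ρ
        = (1 / (T : ℝ)) * ∫ x, ∑ t, (inner ℝ (ψ (f x t)) (V (gstar t x)) : ℝ) ∂ρ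
      ∧ (∀ t, Measurable (gstar t))
      ∧ (∀ t, ∃ M : ℝ, ∀ x, ‖gstar t x‖ ≤ M) := by
  have hy₀ : ((⟨a, le_refl a, hab⟩ : Set.Icc a b) : Set.Icc a b) ∈ (Set.univ : Set (Set.Icc a b)) :=
    trivial
  -- bound on ψ
  obtain ⟨M, hM, hM0⟩ : ∃ M : ℝ, (∀ y, ‖ψ y‖ ≤ M) ∧ 0 ≤ M := by
    obtain ⟨y₀, -, h⟩ := isCompact_univ.exists_isMaxOn ⟨_, hy₀⟩ hψ.norm.continuousOn
    exact ⟨‖ψ y₀‖, fun y => h (Set.mem_univ y), norm_nonneg _⟩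
  -- integrability of ψ against any finite measure on Icc a b
  have hψint : ∀ (μ : Measure (Set.Icc a b)) [IsProbabilityMeasure μ], Integrable ψ μ := by
    intro μ _
    exact (integrable_const M).mono' hψ.aestronglyMeasurable (ae_of_all _ hM)
  -- measurability of gstar
  have hgmeas : ∀ t, Measurable (gstar t) := by
    intro t
    haveI := hκ t
    have h1 : StronglyMeasurable (Function.uncurry fun (_ : X) (y : Set.Icc a b) => ψ y) :=
      hψ.stronglyMeasurable.comp_measurable measurable_snd
    have h2 : StronglyMeasurable fun x => ∫ y, ψ y ∂((κ t) x) :=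
      h1.integral_kernel_prod_right
    have : gstar t = fun x => ∫ y, ψ y ∂((κ t) x) := funext fun x => hg t x
    rw [this]
    exact h2.measurable
  -- boundedness of gstar
  have hgbound : ∀ t x, ‖gstar t x‖ ≤ M := by
    intro t x
    haveI := hκ t
    rw [hg]
    calc ‖∫ y, ψ y ∂((κ t) x)‖ ≤ M * (((κ t) x) Set.univ).toReal :=
          norm_integral_le_of_norm_le_const (ae_of_all _ hM)
      _ = M := by simp
  -- pointwise key identity
  have key : ∀ t x, ∫ y, ℓ (f x t) y ∂((κ t) x) = (inner ℝ (ψ (f x t)) (V (gstar t x)) : ℝ) := by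
    intro t x
    haveI := hκ t
    have hint : Integrable ψ ((κ t) x) := hψint _
    simp_rw [hℓ]
    rw [hg, ← V.integral_comp_comm hint, ← integral_inner (V.integrable_comp hint)]
  -- integrability of the inner products
  have hInt : ∀ t : Fin T, Integrable (fun x => (inner ℝ (ψ (f x t)) (V (gstar t x)) : ℝ)) ρ := by
    intro t
    have hmf : Measurable fun x => ψ (f x t) :=
      hψ.measurable.comp ((measurable_pi_apply t).comp hf)
    have hmg : Measurable fun x => V (gstar t x) := V.measurable.comp (hgmeas t)
    refine (integrable_const (M * (‖V‖ * M))).mono' (hmf.inner hmg).aestronglyMeasurable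
      (ae_of_all _ fun x => ?_)
    calc ‖(inner ℝ (ψ (f x t)) (V (gstar t x)) : ℝ)‖
        ≤ ‖ψ (f x t)‖ * ‖V (gstar t x)‖ := norm_inner_le_norm _ _
      _ ≤ M * (‖V‖ * M) := by
          refine mul_le_mul (hM _) ?_ (norm_nonneg _) hM0
          exact (V.le_opNorm _).trans (by
            exact mul_le_mul_of_nonneg_left (hgbound t x) (norm_nonneg V))
  refine ⟨?_, hgmeas, fun t => ⟨M, hgbound t⟩⟩
  congr 1
  rw [integral_finset_sum _ fun t _ => hInt t]
  refine Finset.sum_congr rfl fun t _ => integral_congr_ae (ae_of_all _ fun x => key t x)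
end

section
/- Let g_1,…,g_T : X → H be measurable functions such that x ↦ ‖g_t(x)‖_H is bounded almost everywhere, and define r(x,c) = (1/T) Σ_{t=1}^T ⟨ψ(c_t), V g_t(x)⟩_H for x ∈ X and c = (c_1,…,c_T) ∈ C. Then: (i) the function m(x) = min_{c ∈ C} r(x,c) is well defined and measurable; (ii) there exists a measurable selector f° : X → Y^T with f°(x) ∈ C and r(x, f°(x)) = m(x) for all x ∈ X; (iii) the functional Ē(f) = ∫_X r(x, f(x)) dρ(x) over measurable f : X → C satisfies Ē(f°) = ∫_X m(x) dρ(x) = inf{Ē(f) : f : X → C measurable}. -/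
open MeasureTheory ProbabilityTheory TopologicalSpace

noncomputable def coordE (a b : ℝ) (T : ℕ) (i : ℕ) (c : Fin T → Set.Icc a b) : ℝ :=
  if h : i < T then (c ⟨i, h⟩ : ℝ) else 0

theorem coordE_cont (a b : ℝ) (T : ℕ) (i : ℕ) : Continuous (coordE a b T i) := by
  unfold coordE; split
  · exact continuous_subtype_val.comp (continuous_apply _)
  · exact continuous_const

theorem coordE_le (a b : ℝ) (T : ℕ) (i : ℕ) (c : Fin T → Set.Icc a b) :
    coordE a b T i c ≤ max b 0 := by
  unfold coordE; split
  · exact le_max_of_le_left (c _).2.2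
  · exact le_max_right _ _

noncomputable def histV (a b : ℝ) (T : ℕ) {X : Type*}
    (F : X → (Fin T → Set.Icc a b) → ℝ) (m : X → ℝ) (u : ℕ → Fin T → Set.Icc a b) :
    (k : ℕ) → X → Fin k → ℝ
  | 0 => fun _ => Fin.elim0
  | (k+1) => fun x => Fin.snoc (histV a b T F m u k x)
      (⨆ j : ℕ, ⨅ n : ℕ,
        if F x (u n) < m x + 1/(j+1 : ℝ) ∧
            ∀ i : Fin k, coordE a b T i (u n) < histV a b T F m u k x i + 1/(j+1 : ℝ)
        then coordE a b T k (u n) else max b 0)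

noncomputable def lexV (a b : ℝ) (T : ℕ) {X : Type*}
    (F : X → (Fin T → Set.Icc a b) → ℝ) (m : X → ℝ) (u : ℕ → Fin T → Set.Icc a b)
    (k : ℕ) (x : X) : ℝ :=
  histV a b T F m u (k+1) x (Fin.last k)

theorem histV_eq (a b : ℝ) (T : ℕ) {X : Type*}
    (F : X → (Fin T → Set.Icc a b) → ℝ) (m : X → ℝ) (u : ℕ → Fin T → Set.Icc a b) :
    ∀ (k : ℕ) (x : X) (i : Fin k), histV a b T F m u k x i = lexV a b T F m u i x := by
  intro k
  induction k with
  | zero => exact fun x i => i.elim0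
  | succ k ih =>
    intro x i
    refine Fin.lastCases ?_ ?_ i
    · rfl
    · intro i
      have : histV a b T F m u (k+1) x i.castSucc = histV a b T F m u k x i := by
        simp [histV, Fin.snoc_castSucc]
      rw [this, ih x i]
      rfl

theorem lexV_eq (a b : ℝ) (T : ℕ) {X : Type*}
    (F : X → (Fin T → Set.Icc a b) → ℝ) (m : X → ℝ) (u : ℕ → Fin T → Set.Icc a b)
    (k : ℕ) (x : X) :
    lexV a b T F m u k x = ⨆ j : ℕ, ⨅ n : ℕ,
      if F x (u n) < m x + 1/(j+1 : ℝ) ∧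
          ∀ i : Fin k, coordE a b T i (u n) < lexV a b T F m u i x + 1/(j+1 : ℝ)
      then coordE a b T k (u n) else max b 0 := by
  have : lexV a b T F m u k x = ⨆ j : ℕ, ⨅ n : ℕ,
      if F x (u n) < m x + 1/(j+1 : ℝ) ∧
          ∀ i : Fin k, coordE a b T i (u n) < histV a b T F m u k x i + 1/(j+1 : ℝ)
      then coordE a b T k (u n) else max b 0 := by
    simp [lexV, histV, Fin.snoc_last]
  rw [this]
  simp_rw [histV_eq]

theorem measSelector {X : Type*} [MeasurableSpace X] (a b : ℝ) (hab : a ≤ b) (T : ℕ)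
    (C : Set (Fin T → Set.Icc a b)) (hCne : C.Nonempty) (hCcomp : IsCompact C)
    (F : X → (Fin T → Set.Icc a b) → ℝ)
    (hFc : ∀ x, Continuous (F x)) (hFm : ∀ c, Measurable fun x => F x c) :
    ∃ f0 : X → Fin T → Set.Icc a b,
      Measurable f0 ∧ (∀ x, f0 x ∈ C) ∧ (∀ x, ∀ c ∈ C, F x (f0 x) ≤ F x c) ∧
      Measurable fun x => F x (f0 x) := by
  classical
  haveI : Nonempty ↥C := hCne.to_subtype
  set u : ℕ → Fin T → Set.Icc a b := fun n => (denseSeq ↥C n : _) with hu_def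
  have hu : ∀ n, u n ∈ C := fun n => (denseSeq ↥C n).2
  have huC : C ⊆ closure (Set.range u) := by
    intro c hc
    have h1 : (⟨c, hc⟩ : ↥C) ∈ closure (Set.range (denseSeq ↥C)) := by
      rw [(denseRange_denseSeq ↥C).closure_range]; trivial
    have h2 := (image_closure_subset_closure_image (f := (Subtype.val : ↥C → _))
      continuous_subtype_val) (Set.mem_image_of_mem _ h1)
    refine closure_mono ?_ h2
    rintro - ⟨y, ⟨n, rfl⟩, rfl⟩
    exact ⟨n, rfl⟩
  set m : X → ℝ := fun x => ⨅ n, F x (u n) with hm_def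
  have hmmeas : Measurable m := Measurable.iInf fun n => hFm (u n)
  have hbdd : ∀ x, BddBelow (Set.range fun n => F x (u n)) := by
    intro x
    obtain ⟨lb, hlb⟩ := (isCompact_range (hFc x)).bddBelow
    exact ⟨lb, by rintro - ⟨n, rfl⟩; exact hlb ⟨u n, rfl⟩⟩
  have hmle : ∀ x, ∀ c ∈ C, m x ≤ F x c := by
    intro x c hc
    have h1 : F x c ∈ closure (F x '' Set.range u) :=
      image_closure_subset_closure_image (hFc x) (Set.mem_image_of_mem _ (huC hc))
    have h2 : closure (F x '' Set.range u) ⊆ Set.Ici (m x) := by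
      apply isClosed_Ici.closure_subset_iff.2
      rintro - ⟨-, ⟨n, rfl⟩, rfl⟩
      exact ciInf_le (hbdd x) n
    exact h2 h1
  set v : ℕ → X → ℝ := lexV a b T F m u with hv_def
  have hv : ∀ k x, v k x = ⨆ j : ℕ, ⨅ n : ℕ,
      if F x (u n) < m x + 1/(j+1 : ℝ) ∧
          ∀ i : Fin k, coordE a b T i (u n) < v i x + 1/(j+1 : ℝ)
      then coordE a b T k (u n) else max b 0 := fun k x => lexV_eq a b T F m u k x
  set A : ℕ → X → Set (Fin T → Set.Icc a b) := fun k x =>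
    C ∩ {c | F x c ≤ m x} ∩ ⋂ i : Fin k, {c | coordE a b T i c ≤ v i x} with hA_def
  have hAmem : ∀ k x c, c ∈ A k x ↔
      c ∈ C ∧ F x c ≤ m x ∧ ∀ i : Fin k, coordE a b T i c ≤ v i x := by
    intro k x c
    simp [hA_def, Set.mem_iInter, and_assoc]
  have hAcomp : ∀ k x, IsCompact (A k x) := by
    intro k x
    apply IsCompact.inter_right
    · exact hCcomp.inter_right (isClosed_le (hFc x) continuous_const)
    · exact isClosed_iInter fun i => isClosed_le (coordE_cont a b T i) continuous_const
  have main : ∀ k : ℕ, (∀ x, (A k x).Nonempty) ∧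
      (∀ x, ∀ c ∈ A k x, ∀ i : Fin k, coordE a b T i c = v i x) ∧
      (∀ i, i < k → Measurable (v i)) := by
    intro k
    induction k with
    | zero =>
      refine ⟨?_, fun x c _ i => i.elim0, fun i hi => absurd hi (Nat.not_lt_zero i)⟩
      intro x
      obtain ⟨c, hcC, hcmin⟩ := hCcomp.exists_isMinOn hCne (hFc x).continuousOn
      refine ⟨c, (hAmem 0 x c).2 ⟨hcC, ?_, fun i => i.elim0⟩⟩
      exact le_ciInf fun n => hcmin (hu n)
    | succ k ih =>
      obtain ⟨ihne, iheq, ihmeas⟩ := ih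
      have key : ∀ x, ∃ cs ∈ A k x,
          (∀ c ∈ A k x, coordE a b T k cs ≤ coordE a b T k c) ∧
          v k x = coordE a b T k cs := by
        intro x
        obtain ⟨cs, hcsA, hcsmin⟩ :=
          (hAcomp k x).exists_isMinOn (ihne x) (coordE_cont a b T k).continuousOn
        set I := coordE a b T k cs with hI_def
        set cond : ℕ → ℕ → Prop := fun j n => F x (u n) < m x + 1/(j+1 : ℝ) ∧
          ∀ i : Fin k, coordE a b T i (u n) < v i x + 1/(j+1 : ℝ) with hcond_def
        set q : ℕ → ℕ → ℝ := fun j n =>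
          if cond j n then coordE a b T k (u n) else max b 0 with hq_def
        have hεpos : ∀ j : ℕ, (0:ℝ) < 1/(j+1 : ℝ) := by
          intro j
          positivity
        have hvk : v k x = ⨆ j, ⨅ n, q j n := hv k x
        have hqlb : ∀ j, BddBelow (Set.range (q j)) := by
          intro j
          refine ⟨min (min a b) 0, ?_⟩
          rintro - ⟨n, rfl⟩
          by_cases h : cond j n
          · rw [hq_def]
            simp only [if_pos h]
            unfold coordE
            split
            · exact le_trans (min_le_left _ _) (le_trans (min_le_left _ _) (u n _).2.1)
            · exact min_le_right _ _
          · rw [hq_def]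
            simp only [if_neg h]
            exact le_trans (min_le_right _ _) (le_max_right _ _)
        have hOex : ∀ (j : ℕ) (η : ℝ), 0 < η → ∃ n, cond j n ∧ coordE a b T k (u n) < I + η := by
          intro j η hη
          have hcsmem := (hAmem k x cs).1 hcsA
          set O : Set (Fin T → Set.Icc a b) :=
            {c | F x c < m x + 1/(j+1 : ℝ)} ∩
            ((⋂ i : Fin k, {c | coordE a b T i c < v i x + 1/(j+1 : ℝ)}) ∩
              {c | coordE a b T k c < I + η}) with hO_def
          have hOopen : IsOpen O := by
            refine ((isOpen_lt (hFc x) continuous_const)).inter (IsOpen.inter ?_ ?_)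
            · exact isOpen_iInter_of_finite fun i =>
                isOpen_lt (coordE_cont a b T i) continuous_const
            · exact isOpen_lt (coordE_cont a b T k) continuous_const
          have hcsO : cs ∈ O := by
            refine ⟨lt_of_le_of_lt hcsmem.2.1 (lt_add_of_pos_right _ (hεpos j)), ?_, ?_⟩
            · exact Set.mem_iInter.2 fun i =>
                lt_of_le_of_lt (hcsmem.2.2 i) (lt_add_of_pos_right _ (hεpos j))
            · exact lt_add_of_pos_right _ hη
          obtain ⟨c', hc'O, n, rfl⟩ :=
            mem_closure_iff.1 (huC hcsmem.1) O hOopen hcsO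
          exact ⟨n, ⟨hc'O.1, fun i => Set.mem_iInter.1 hc'O.2.1 i⟩, hc'O.2.2⟩
        have hβle : ∀ j, (⨅ n, q j n) ≤ I := by
          intro j
          by_contra hcon
          push_neg at hcon
          obtain ⟨n, hn, hlt⟩ := hOex j ((⨅ n, q j n) - I) (by linarith)
          have h1 : (⨅ n, q j n) ≤ q j n := ciInf_le (hqlb j) n
          rw [hq_def] at h1
          simp only [if_pos hn] at h1
          linarith
        have hβbdd : BddAbove (Set.range fun j => ⨅ n, q j n) :=
          ⟨I, by rintro - ⟨j, rfl⟩; exact hβle j⟩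
        have dir1 : v k x ≤ I := by
          rw [hvk]; exact ciSup_le hβle
        have hβleV : ∀ j, (⨅ n, q j n) ≤ v k x := by
          intro j
          rw [hvk]
          exact le_ciSup hβbdd j
        have hwj : ∀ j, ∃ n, cond j n ∧
            coordE a b T k (u n) < (⨅ n, q j n) + 1/(j+1 : ℝ) := by
          intro j
          obtain ⟨n0, hn0, -⟩ := hOex j 1 one_pos
          obtain ⟨n, hn⟩ := exists_lt_of_ciInf_lt
            (lt_add_of_pos_right (⨅ n, q j n) (hεpos j))
          by_cases h : cond j n
          · refine ⟨n, h, ?_⟩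
            rw [hq_def] at hn
            simpa only [if_pos h] using hn
          · refine ⟨n0, hn0, ?_⟩
            rw [hq_def] at hn
            simp only [if_neg h] at hn
            exact lt_of_le_of_lt (coordE_le a b T k (u n0)) hn
        choose w hw1 hw2 using hwj
        obtain ⟨cl, hclC, φ, hφ, hconv⟩ := hCcomp.tendsto_subseq (fun j => hu (w j))
        have hδ0 : Filter.Tendsto (fun l : ℕ => 1/((φ l : ℝ)+1)) Filter.atTop (nhds 0) :=
          tendsto_one_div_add_atTop_nhds_zero_nat.comp hφ.tendsto_atTop
        have h1 : F x cl ≤ m x := by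
          have hF : Filter.Tendsto (fun l => F x (u (w (φ l)))) Filter.atTop (nhds (F x cl)) :=
            ((hFc x).tendsto cl).comp hconv
          have hg : Filter.Tendsto (fun l : ℕ => m x + 1/((φ l : ℝ)+1)) Filter.atTop
              (nhds (m x + 0)) := tendsto_const_nhds.add hδ0
          have := le_of_tendsto_of_tendsto' hF hg (fun l => (hw1 (φ l)).1.le)
          simpa using this
        have h2 : ∀ i : Fin k, coordE a b T i cl ≤ v i x := by
          intro i
          have hF : Filter.Tendsto (fun l => coordE a b T i (u (w (φ l)))) Filter.atTop
              (nhds (coordE a b T i cl)) := ((coordE_cont a b T i).tendsto cl).comp hconv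
          have hg : Filter.Tendsto (fun l : ℕ => v i x + 1/((φ l : ℝ)+1)) Filter.atTop
              (nhds (v i x + 0)) := tendsto_const_nhds.add hδ0
          have := le_of_tendsto_of_tendsto' hF hg (fun l => ((hw1 (φ l)).2 i).le)
          simpa using this
        have h3 : coordE a b T k cl ≤ v k x := by
          have hF : Filter.Tendsto (fun l => coordE a b T k (u (w (φ l)))) Filter.atTop
              (nhds (coordE a b T k cl)) := ((coordE_cont a b T k).tendsto cl).comp hconv
          have hg : Filter.Tendsto (fun l : ℕ => v k x + 1/((φ l : ℝ)+1)) Filter.atTop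
              (nhds (v k x + 0)) := tendsto_const_nhds.add hδ0
          have hle : ∀ l, coordE a b T k (u (w (φ l))) ≤ v k x + 1/((φ l : ℝ)+1) :=
            fun l => le_trans (hw2 (φ l)).le (add_le_add (hβleV (φ l)) le_rfl)
          have := le_of_tendsto_of_tendsto' hF hg hle
          simpa using this
        have hclA : cl ∈ A k x := (hAmem k x cl).2 ⟨hclC, h1, h2⟩
        have dir2 : I ≤ v k x := le_trans (hcsmin hclA) h3
        exact ⟨cs, hcsA, fun c hc => hcsmin hc, le_antisymm dir1 dir2⟩
      have hAstep : ∀ x c, c ∈ A (k+1) x ↔ c ∈ A k x ∧ coordE a b T k c ≤ v k x := by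
        intro x c
        rw [hAmem, hAmem]
        constructor
        · rintro ⟨h1, h2, h3⟩
          exact ⟨⟨h1, h2, fun i => h3 i.castSucc⟩, h3 (Fin.last k)⟩
        · rintro ⟨⟨h1, h2, h3⟩, h4⟩
          refine ⟨h1, h2, fun i => ?_⟩
          refine Fin.lastCases ?_ ?_ i
          · exact h4
          · exact fun i => h3 i
      refine ⟨?_, ?_, ?_⟩
      · intro x
        obtain ⟨cs, hcsA, hcsmin, hval⟩ := key x
        exact ⟨cs, (hAstep x cs).2 ⟨hcsA, hval.ge⟩⟩
      · intro x c hc i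
        obtain ⟨cs, hcsA, hcsmin, hval⟩ := key x
        have hc' := (hAstep x c).1 hc
        refine Fin.lastCases ?_ ?_ i
        · exact le_antisymm hc'.2 (hval ▸ hcsmin c hc'.1)
        · exact fun i => iheq x c hc'.1 i
      · intro i hi
        rcases Nat.lt_succ_iff_lt_or_eq.1 hi with h | h
        · exact ihmeas i h
        · subst h
          have : v i = fun x => ⨆ j : ℕ, ⨅ n : ℕ,
              if F x (u n) < m x + 1/(j+1 : ℝ) ∧
                  ∀ i' : Fin i, coordE a b T i' (u n) < v i' x + 1/(j+1 : ℝ)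
              then coordE a b T i (u n) else max b 0 := funext fun x => hv i x
          rw [this]
          apply Measurable.iSup
          intro j
          apply Measurable.iInf
          intro n
          apply Measurable.ite _ measurable_const measurable_const
          have hset : {x | F x (u n) < m x + 1/(j+1 : ℝ) ∧
              ∀ i' : Fin i, coordE a b T i' (u n) < v i' x + 1/(j+1 : ℝ)} =
              {x | F x (u n) < m x + 1/(j+1 : ℝ)} ∩
              ⋂ i' : Fin i, {x | coordE a b T i' (u n) < v i' x + 1/(j+1 : ℝ)} := by
            ext x
            simp [Set.mem_iInter]
          rw [hset]
          refine MeasurableSet.inter ?_ (MeasurableSet.iInter fun i' => ?_)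
          · exact measurableSet_lt (hFm (u n)) (hmmeas.add measurable_const)
          · exact measurableSet_lt measurable_const
              ((ihmeas i' i'.isLt).add measurable_const)
  obtain ⟨hTne, hTeq, hTmeas⟩ := main T
  have hcoord : ∀ x c, c ∈ A T x → ∀ i : Fin T, (c i : ℝ) = v i x := by
    intro x c hc i
    have := hTeq x c hc i
    rwa [coordE, dif_pos i.isLt, Fin.eta] at this
  have hmemIcc : ∀ (t : ℝ), min b (max a t) ∈ Set.Icc a b :=
    fun t => ⟨le_min hab (le_max_left a t), min_le_left _ _⟩
  set f0 : X → Fin T → Set.Icc a b := fun x i => ⟨min b (max a (v i x)), hmemIcc _⟩ with hf0_def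
  have hf0A : ∀ x, f0 x ∈ A T x := by
    intro x
    obtain ⟨c, hc⟩ := hTne x
    have : f0 x = c := by
      funext i
      apply Subtype.ext
      have hvi := (hcoord x c hc i).symm
      show min b (max a (v i x)) = (c i : ℝ)
      rw [hvi, max_eq_right (c i).2.1, min_eq_right (c i).2.2]
    rw [this]; exact hc
  have hf0C : ∀ x, f0 x ∈ C := fun x => ((hAmem T x _).1 (hf0A x)).1
  have hf0le : ∀ x, F x (f0 x) ≤ m x := fun x => ((hAmem T x _).1 (hf0A x)).2.1
  refine ⟨f0, ?_, hf0C, ?_, ?_⟩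
  · apply measurable_pi_lambda
    intro i
    apply Measurable.subtype_mk
    exact measurable_const.min (measurable_const.max (hTmeas i i.isLt))
  · exact fun x c hc => (hf0le x).trans (hmle x c hc)
  · have : (fun x => F x (f0 x)) = m := by
      funext x
      exact le_antisymm (hf0le x) (hmle x (f0 x) (hf0C x))
    rw [this]; exact hmmeas

/-- existence of a measurable selector minimizing
`r(x,c) = (1/T) ∑ₜ ⟨ψ(cₜ), V gₜ(x)⟩` over the compact set `C`, measurability of
the minimum value, and minimality of the corresponding integral functional. -/
theorem stmt1
    {X : Type*} [MeasurableSpace X] (ρ : Measure X) [IsProbabilityMeasure ρ]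
    (a b : ℝ) (hab : a ≤ b)
    {H : Type*} [NormedAddCommGroup H] [InnerProductSpace ℝ H]
    [CompleteSpace H] [SecondCountableTopology H]
    [MeasurableSpace H] [BorelSpace H]
    (ψ : Set.Icc a b → H) (hψ : Continuous ψ)
    (V : H →L[ℝ] H)
    (T : ℕ) (hT : 1 ≤ T)
    (C : Set (Fin T → Set.Icc a b)) (hCne : C.Nonempty) (hCcomp : IsCompact C)
    (g : Fin T → X → H) (hgmeas : ∀ t, Measurable (g t))
    (hgbdd : ∀ t, ∃ M : ℝ, ∀ᵐ x ∂ρ, ‖g t x‖ ≤ M)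
    (r : X → (Fin T → Set.Icc a b) → ℝ)
    (hr : ∀ x c, r x c = (1 / (T : ℝ)) * ∑ t, (inner ℝ (ψ (c t)) (V (g t x)) : ℝ)) :
    ∃ f0 : X → Fin T → Set.Icc a b,
      Measurable f0 ∧ (∀ x, f0 x ∈ C) ∧
      (∀ x, ∀ c ∈ C, r x (f0 x) ≤ r x c) ∧
      Measurable (fun x => r x (f0 x)) ∧
      (∀ f : X → Fin T → Set.Icc a b, Measurable f → (∀ x, f x ∈ C) →
        ∫ x, r x (f0 x) ∂ρ ≤ ∫ x, r x (f x) ∂ρ) := by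
  have hFc : ∀ x, Continuous (r x) := by
    intro x
    have : r x = fun c => (1 / (T : ℝ)) * ∑ t, (inner ℝ (ψ (c t)) (V (g t x)) : ℝ) :=
      funext fun c => hr x c
    rw [this]
    refine continuous_const.mul (continuous_finset_sum _ fun t _ => ?_)
    exact (hψ.comp (continuous_apply t)).inner continuous_const
  have hFm : ∀ c, Measurable fun x => r x c := by
    intro c
    have : (fun x => r x c) =
        fun x => (1 / (T : ℝ)) * ∑ t, (inner ℝ (ψ (c t)) (V (g t x)) : ℝ) :=
      funext fun x => hr x c
    rw [this]
    refine Measurable.const_mul (Finset.measurable_sum _ fun t _ => ?_) _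
    exact measurable_const.inner (V.continuous.measurable.comp (hgmeas t))
  have hInt : ∀ f : X → Fin T → Set.Icc a b, Measurable f →
      Integrable (fun x => r x (f x)) ρ := by
    intro f hf
    haveI : Nonempty (Set.Icc a b) := Set.nonempty_Icc.2 hab |>.to_subtype
    obtain ⟨y0, -, hy0⟩ := isCompact_univ.exists_isMaxOn Set.univ_nonempty
      (hψ.norm.continuousOn (s := Set.univ))
    have hMψ0 : (0:ℝ) ≤ ‖ψ y0‖ := norm_nonneg _
    choose M hM using hgbdd
    have hae : ∀ᵐ x ∂ρ, ∀ t, ‖g t x‖ ≤ M t := (ae_all_iff).2 hM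
    have hmeas : Measurable fun x => r x (f x) := by
      have : (fun x => r x (f x)) =
          fun x => (1 / (T : ℝ)) * ∑ t, (inner ℝ (ψ (f x t)) (V (g t x)) : ℝ) :=
        funext fun x => hr x (f x)
      rw [this]
      refine Measurable.const_mul (Finset.measurable_sum _ fun t _ => ?_) _
      exact (hψ.measurable.comp ((measurable_pi_apply t).comp hf)).inner
        (V.continuous.measurable.comp (hgmeas t))
    refine (integrable_const
      ((1 / (T : ℝ)) * ∑ t : Fin T, ‖ψ y0‖ * (‖V‖ * M t))).mono'
      hmeas.aestronglyMeasurable ?_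
    filter_upwards [hae] with x hx
    rw [Real.norm_eq_abs, hr, abs_mul, abs_of_nonneg (by positivity : (0:ℝ) ≤ 1/(T:ℝ))]
    refine mul_le_mul_of_nonneg_left ?_ (by positivity)
    refine le_trans (Finset.abs_sum_le_sum_abs _ _) (Finset.sum_le_sum fun t _ => ?_)
    have h1 : |(inner ℝ (ψ (f x t)) (V (g t x)) : ℝ)| ≤ ‖ψ (f x t)‖ * ‖V (g t x)‖ :=
      abs_real_inner_le_norm _ _
    refine h1.trans (mul_le_mul (hy0 (Set.mem_univ _)) ?_ (norm_nonneg _) hMψ0)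
    exact le_trans (V.le_opNorm _) (mul_le_mul_of_nonneg_left (hx t) (norm_nonneg _))
  obtain ⟨f0, hf0meas, hf0C, hf0min, hf0vmeas⟩ :=
    measSelector a b hab T C hCne hCcomp r hFc hFm
  refine ⟨f0, hf0meas, hf0C, hf0min, hf0vmeas, ?_⟩
  intro f hf hfC
  exact integral_mono (hInt f0 hf0meas) (hInt f hf)
    (fun x => hf0min x (f x) (hfC x))
end

section
/- (Proposition 1.) Let ℓ : Y × Y → ℝ be SELF with representation ℓ(y,y') = ⟨ψ(y), V ψ(y')⟩_H. Then the expected risk E(f) over measurable functions f : X → C admits a measurable minimizer f* : X → C; moreover, any measurable minimizer f* of E satisfies, for ρ-almost every x ∈ X, f*(x) ∈ argmin_{c ∈ C} Σ_{t=1}^T ⟨ψ(c_t), V g*_t(x)⟩_H, where g*_t(x) = ∫_Y ψ(y) dκ_t(x)(y). -/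
open MeasureTheory ProbabilityTheory

open MeasureTheory Filter Topology

open scoped Classical in
/-- Chained selection of indices: given a family of measurable sets `S k n` with a
nonempty start and a step that stays close, pick least indices recursively. -/
noncomputable def chainSel {X : Type*} {P : Type*} [PseudoMetricSpace P]
    (c : ℕ → P) (S : ℕ → ℕ → Set X)
    (h0 : ∀ x, ∃ n, x ∈ S 0 n)
    (hstep : ∀ k i x, x ∈ S k i → ∃ n,
      dist (c n) (c i) ≤ 3 * (1 / 2 : ℝ) ^ (k + 1) ∧ x ∈ S (k + 1) n) :
    (k : ℕ) → {f : X → ℕ // ∀ x, x ∈ S k (f x)}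
  | 0 => ⟨fun x => Nat.find (h0 x), fun x => Nat.find_spec (h0 x)⟩
  | (k + 1) =>
      ⟨fun x => Nat.find (hstep k ((chainSel c S h0 hstep k).1 x) x
          ((chainSel c S h0 hstep k).2 x)),
        fun x => (Nat.find_spec (hstep k ((chainSel c S h0 hstep k).1 x) x
          ((chainSel c S h0 hstep k).2 x))).2⟩

open scoped Classical in
lemma chainSel_succ_dist {X : Type*} {P : Type*} [PseudoMetricSpace P]
    (c : ℕ → P) (S : ℕ → ℕ → Set X)
    (h0 : ∀ x, ∃ n, x ∈ S 0 n)
    (hstep : ∀ k i x, x ∈ S k i → ∃ n,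
      dist (c n) (c i) ≤ 3 * (1 / 2 : ℝ) ^ (k + 1) ∧ x ∈ S (k + 1) n)
    (k : ℕ) (x : X) :
    dist (c ((chainSel c S h0 hstep (k + 1)).1 x)) (c ((chainSel c S h0 hstep k).1 x))
      ≤ 3 * (1 / 2 : ℝ) ^ (k + 1) :=
  (Nat.find_spec (hstep k ((chainSel c S h0 hstep k).1 x) x
    ((chainSel c S h0 hstep k).2 x))).1

open scoped Classical in
lemma chainSel_measurable {X : Type*} [MeasurableSpace X] {P : Type*} [PseudoMetricSpace P]
    (c : ℕ → P) (S : ℕ → ℕ → Set X)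
    (h0 : ∀ x, ∃ n, x ∈ S 0 n)
    (hstep : ∀ k i x, x ∈ S k i → ∃ n,
      dist (c n) (c i) ≤ 3 * (1 / 2 : ℝ) ^ (k + 1) ∧ x ∈ S (k + 1) n)
    (hS : ∀ k n, MeasurableSet (S k n)) :
    ∀ k, Measurable (chainSel c S h0 hstep k).1 := by
  intro k
  induction k with
  | zero =>
    apply measurable_to_countable'
    intro n
    have : (chainSel c S h0 hstep 0).1 ⁻¹' {n}
        = S 0 n ∩ ⋂ m ∈ Finset.range n, (S 0 m)ᶜ := by
      ext x
      simp only [Set.mem_preimage, Set.mem_singleton_iff, chainSel, Nat.find_eq_iff,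
        Set.mem_inter_iff, Set.mem_iInter, Set.mem_compl_iff, Finset.mem_range]
    rw [this]
    exact (hS 0 n).inter (MeasurableSet.biInter (Set.to_countable _)
      fun m _ => (hS 0 m).compl)
  | succ k ih =>
    apply measurable_to_countable'
    intro n
    have : (chainSel c S h0 hstep (k + 1)).1 ⁻¹' {n}
        = ⋃ i, ((chainSel c S h0 hstep k).1 ⁻¹' {i}) ∩
            ({x | dist (c n) (c i) ≤ 3 * (1 / 2 : ℝ) ^ (k + 1) ∧ x ∈ S (k + 1) n} ∩
              ⋂ m ∈ Finset.range n,
                {x | dist (c m) (c i) ≤ 3 * (1 / 2 : ℝ) ^ (k + 1) ∧ x ∈ S (k + 1) m}ᶜ) := by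
      ext x
      simp only [Set.mem_preimage, Set.mem_singleton_iff, Set.mem_iUnion, Set.mem_inter_iff,
        Set.mem_iInter, Set.mem_compl_iff, Set.mem_setOf_eq, Finset.mem_range]
      constructor
      · intro hx
        refine ⟨(chainSel c S h0 hstep k).1 x, rfl, ?_⟩
        have := (Nat.find_eq_iff (hstep k ((chainSel c S h0 hstep k).1 x) x
          ((chainSel c S h0 hstep k).2 x))).1 hx
        exact ⟨this.1, fun m hm => this.2 m hm⟩
      · rintro ⟨i, hi, hcond⟩
        rw [← hi] at hcond
        exact (Nat.find_eq_iff (hstep k ((chainSel c S h0 hstep k).1 x) x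
          ((chainSel c S h0 hstep k).2 x))).2 ⟨hcond.1, fun m hm => hcond.2 m hm⟩
    rw [this]
    refine MeasurableSet.iUnion fun i => (ih (MeasurableSet.singleton i)).inter ?_
    refine MeasurableSet.inter ?_ ?_
    · exact (MeasurableSet.const _).inter (hS _ _)
    · exact MeasurableSet.biInter (Set.to_countable _)
        fun m _ => ((MeasurableSet.const _).inter (hS _ _)).compl

/-- The minimum of a Carathéodory function over a fixed compact set is measurable
in the parameter and attained. -/
lemma measMinOn {X : Type*} [MeasurableSpace X] {P : Type*} [MetricSpace P]
    [SecondCountableTopology P] [MeasurableSpace P] [BorelSpace P]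
    (Φ : X → P → ℝ) (hm : ∀ p, Measurable fun x => Φ x p) (hc : ∀ x, Continuous (Φ x))
    (K : Set P) (hK : IsCompact K) (hne : K.Nonempty) :
    ∃ g : X → ℝ, Measurable g ∧ (∀ x, ∃ p ∈ K, Φ x p = g x) ∧
      ∀ x, ∀ p ∈ K, g x ≤ Φ x p := by
  haveI : Nonempty K := hne.to_subtype
  set d : ℕ → P := fun j => (TopologicalSpace.denseSeq K j : P) with hd
  have hdK : ∀ j, d j ∈ K := fun j => (TopologicalSpace.denseSeq K j).2
  have hdense : ∀ p ∈ K, ∀ ε > 0, ∃ j, dist p (d j) < ε := by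
    intro p hp ε hε
    rcases Metric.denseRange_iff.1 (TopologicalSpace.denseRange_denseSeq K)
      (⟨p, hp⟩ : K) ε hε with ⟨j, hj⟩
    exact ⟨j, by simpa [hd, Subtype.dist_eq] using hj⟩
  have hattain : ∀ x, ∃ p ∈ K, ∀ q ∈ K, Φ x p ≤ Φ x q := by
    intro x
    obtain ⟨p0, hp0K, hp0⟩ := hK.exists_isMinOn hne (hc x).continuousOn
    exact ⟨p0, hp0K, fun q hq => hp0 hq⟩
  refine ⟨fun x => ⨅ j, Φ x (d j), Measurable.iInf (fun j => hm (d j)), ?_, ?_⟩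
  · intro x
    obtain ⟨p0, hp0K, hp0⟩ := hattain x
    have hbdd : BddBelow (Set.range fun j => Φ x (d j)) :=
      ⟨Φ x p0, by rintro _ ⟨j, rfl⟩; exact hp0 _ (hdK j)⟩
    have h1 : Φ x p0 ≤ ⨅ j, Φ x (d j) := le_ciInf fun j => hp0 _ (hdK j)
    have h2 : (⨅ j, Φ x (d j)) ≤ Φ x p0 := by
      refine le_of_forall_pos_le_add fun ε hε => ?_
      obtain ⟨δ, hδ, hδ'⟩ := Metric.continuousAt_iff.1 ((hc x).continuousAt (x := p0)) ε hε
      obtain ⟨j, hj⟩ := hdense p0 hp0K δ hδ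
      have hlt : dist (Φ x (d j)) (Φ x p0) < ε := hδ' (by rwa [dist_comm])
      rw [Real.dist_eq] at hlt
      have := (abs_lt.1 hlt).2
      calc (⨅ j, Φ x (d j)) ≤ Φ x (d j) := ciInf_le hbdd j
        _ ≤ Φ x p0 + ε := by linarith
    exact ⟨p0, hp0K, le_antisymm h1 h2⟩
  · intro x p hp
    obtain ⟨p0, hp0K, hp0⟩ := hattain x
    have hbdd : BddBelow (Set.range fun j => Φ x (d j)) :=
      ⟨Φ x p0, by rintro _ ⟨j, rfl⟩; exact hp0 _ (hdK j)⟩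
    have h2 : (⨅ j, Φ x (d j)) ≤ Φ x p0 := by
      refine le_of_forall_pos_le_add fun ε hε => ?_
      obtain ⟨δ, hδ, hδ'⟩ := Metric.continuousAt_iff.1 ((hc x).continuousAt (x := p0)) ε hε
      obtain ⟨j, hj⟩ := hdense p0 hp0K δ hδ
      have hlt : dist (Φ x (d j)) (Φ x p0) < ε := hδ' (by rwa [dist_comm])
      rw [Real.dist_eq] at hlt
      have := (abs_lt.1 hlt).2
      calc (⨅ j, Φ x (d j)) ≤ Φ x (d j) := ciInf_le hbdd j
        _ ≤ Φ x p0 + ε := by linarith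
    exact h2.trans (hp0 _ hp)

/-- Measurable argmin selection for a Carathéodory function on a compact metric space. -/
lemma exists_measurable_argmin {X : Type*} [MeasurableSpace X] {P : Type*} [MetricSpace P]
    [CompactSpace P] [SecondCountableTopology P] [Nonempty P]
    [MeasurableSpace P] [BorelSpace P]
    (Φ : X → P → ℝ) (hm : ∀ p, Measurable fun x => Φ x p) (hc : ∀ x, Continuous (Φ x)) :
    ∃ f : X → P, Measurable f ∧ ∀ x p, Φ x (f x) ≤ Φ x p := by
  obtain ⟨m, hmmeas, hmatt, hmle⟩ := measMinOn Φ hm hc Set.univ isCompact_univ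
    Set.univ_nonempty
  set c : ℕ → P := TopologicalSpace.denseSeq P with hcdef
  have hcd : DenseRange c := TopologicalSpace.denseRange_denseSeq P
  have hKb : ∀ nk : ℕ × ℕ, IsCompact (Metric.closedBall (c nk.1) ((1/2 : ℝ) ^ nk.2)) ∧
      (Metric.closedBall (c nk.1) ((1/2 : ℝ) ^ nk.2)).Nonempty := by
    intro nk
    refine ⟨Metric.isClosed_closedBall.isCompact, Metric.nonempty_closedBall.2 (by positivity)⟩
  choose g hg_meas hg_att hg_le using fun nk : ℕ × ℕ =>
    measMinOn Φ hm hc _ (hKb nk).1 (hKb nk).2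
  set S : ℕ → ℕ → Set X := fun k n => {x | g (n, k) x ≤ m x} with hSdef
  have hSmeas : ∀ k n, MeasurableSet (S k n) := fun k n =>
    measurableSet_le (hg_meas (n, k)) hmmeas
  have hS_iff : ∀ k n x, x ∈ S k n ↔ ∃ p, Φ x p ≤ m x ∧ dist p (c n) ≤ (1/2 : ℝ) ^ k := by
    intro k n x
    constructor
    · intro hx
      obtain ⟨p, hpK, hpeq⟩ := hg_att (n, k) x
      exact ⟨p, hpeq.le.trans hx, Metric.mem_closedBall.1 hpK⟩
    · rintro ⟨p, h1, h2⟩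
      exact le_trans (hg_le (n, k) x p (Metric.mem_closedBall.2 h2)) h1
  have h0 : ∀ x, ∃ n, x ∈ S 0 n := by
    intro x
    obtain ⟨p0, -, hp0⟩ := hmatt x
    obtain ⟨j, hj⟩ := Metric.denseRange_iff.1 hcd p0 1 one_pos
    exact ⟨j, (hS_iff 0 j x).2 ⟨p0, hp0.le, by simpa using hj.le⟩⟩
  have hstep : ∀ k i x, x ∈ S k i → ∃ n,
      dist (c n) (c i) ≤ 3 * (1/2 : ℝ) ^ (k + 1) ∧ x ∈ S (k + 1) n := by
    intro k i x hx
    obtain ⟨p, hp1, hp2⟩ := (hS_iff k i x).1 hx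
    obtain ⟨j, hj⟩ := Metric.denseRange_iff.1 hcd p ((1/2 : ℝ) ^ (k + 1)) (by positivity)
    refine ⟨j, ?_, (hS_iff (k+1) j x).2 ⟨p, hp1, hj.le⟩⟩
    have h3 : dist (c j) (c i) ≤ dist (c j) p + dist p (c i) := dist_triangle _ _ _
    have h4 : dist (c j) p < (1/2 : ℝ) ^ (k + 1) := by rwa [dist_comm] at hj
    have h5 : (1/2 : ℝ) ^ k = 2 * (1/2 : ℝ) ^ (k + 1) := by ring
    linarith [hp2, h5 ▸ hp2]
  set F := chainSel c S h0 hstep with hF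
  have hFmeas := chainSel_measurable c S h0 hstep hSmeas
  set fk : ℕ → X → P := fun k x => c ((F k).1 x) with hfk
  have hfkmeas : ∀ k, Measurable (fk k) := fun k =>
    (measurable_of_countable c).comp (hFmeas k)
  have hcauchy : ∀ x, CauchySeq fun k => fk k x := by
    intro x
    apply cauchySeq_of_le_geometric (r := (1/2 : ℝ)) (C := 3/2) (by norm_num)
    intro k
    have := chainSel_succ_dist c S h0 hstep k x
    rw [dist_comm] at this
    calc dist (fk k x) (fk (k+1) x) ≤ 3 * (1/2 : ℝ) ^ (k + 1) := this
      _ = 3/2 * (1/2 : ℝ) ^ k := by ring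
  choose flim hflim using fun x => cauchySeq_tendsto_of_complete (hcauchy x)
  have hflimmeas : Measurable flim := by
    apply measurable_of_tendsto_metrizable hfkmeas
    rw [tendsto_pi_nhds]
    exact hflim
  refine ⟨flim, hflimmeas, ?_⟩
  intro x p
  have hinv : ∀ k, ∃ q, Φ x q ≤ m x ∧ dist q (fk k x) ≤ (1/2 : ℝ) ^ k := by
    intro k
    exact (hS_iff k ((F k).1 x) x).1 ((F k).2 x)
  choose pseq hp1 hp2 using hinv
  have hptend : Filter.Tendsto pseq Filter.atTop (nhds (flim x)) := by
    rw [tendsto_iff_dist_tendsto_zero]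
    apply squeeze_zero (fun k => dist_nonneg)
      (fun k => (dist_triangle (pseq k) (fk k x) (flim x)).trans
        (add_le_add_left (hp2 k) _))
    have h1 : Filter.Tendsto (fun k : ℕ => (1/2 : ℝ) ^ k) Filter.atTop (nhds 0) :=
      tendsto_pow_atTop_nhds_zero_of_lt_one (by norm_num) (by norm_num)
    have h2 : Filter.Tendsto (fun k => dist (fk k x) (flim x)) Filter.atTop (nhds 0) :=
      tendsto_iff_dist_tendsto_zero.1 (hflim x)
    simpa using h1.add h2
  have hmem : Φ x (flim x) ≤ m x := by
    have hclosed : IsClosed {q : P | Φ x q ≤ m x} :=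
      isClosed_le (hc x) continuous_const
    exact hclosed.mem_of_tendsto hptend (Filter.Eventually.of_forall hp1)
  exact hmem.trans (hmle x p (Set.mem_univ p))

/-- Proposition 1: the multitask expected risk admits a measurable
minimizer over measurable functions with values in `C`, and every measurable
minimizer is ρ-a.e. a pointwise argmin of `c ↦ ∑ₜ ⟨ψ(cₜ), V g*ₜ(x)⟩` over `C`. -/
theorem stmt2
    {X : Type*} [MeasurableSpace X] (ρ : Measure X) [IsProbabilityMeasure ρ]
    (a b : ℝ) (hab : a ≤ b)
    {H : Type*} [NormedAddCommGroup H] [InnerProductSpace ℝ H]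
    [CompleteSpace H] [SecondCountableTopology H]
    [MeasurableSpace H] [BorelSpace H]
    (ψ : Set.Icc a b → H) (hψ : Continuous ψ)
    (V : H →L[ℝ] H)
    (ℓ : Set.Icc a b → Set.Icc a b → ℝ)
    (hℓ : ∀ y y', ℓ y y' = (inner ℝ (ψ y) (V (ψ y')) : ℝ))
    (T : ℕ) (hT : 1 ≤ T)
    (κ : Fin T → Kernel X (Set.Icc a b)) (hκ : ∀ t, IsMarkovKernel (κ t))
    (C : Set (Fin T → Set.Icc a b)) (hCne : C.Nonempty) (hCcomp : IsCompact C)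
    (E : (X → Fin T → Set.Icc a b) → ℝ)
    (hE : ∀ f, E f = (1 / (T : ℝ)) * ∑ t, ∫ x, ∫ y, ℓ (f x t) y ∂((κ t) x) ∂ρ)
    (gstar : Fin T → X → H)
    (hg : ∀ t x, gstar t x = ∫ y, ψ y ∂((κ t) x)) :
    (∃ fstar : X → Fin T → Set.Icc a b,
        Measurable fstar ∧ (∀ x, fstar x ∈ C) ∧
        (∀ f : X → Fin T → Set.Icc a b, Measurable f → (∀ x, f x ∈ C) →
          E fstar ≤ E f)) ∧
    (∀ fstar : X → Fin T → Set.Icc a b, Measurable fstar → (∀ x, fstar x ∈ C) →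
      (∀ f : X → Fin T → Set.Icc a b, Measurable f → (∀ x, f x ∈ C) →
        E fstar ≤ E f) →
      ∀ᵐ x ∂ρ, ∀ c ∈ C,
        ∑ t, (inner ℝ (ψ (fstar x t)) (V (gstar t x)) : ℝ)
          ≤ ∑ t, (inner ℝ (ψ (c t)) (V (gstar t x)) : ℝ)) := by
  haveI hYne : Nonempty (Set.Icc a b) := (Set.nonempty_Icc.2 hab).to_subtype
  haveI : CompactSpace (Set.Icc a b) := isCompact_iff_compactSpace.mp isCompact_Icc
  -- measurability of g*
  have hgmeas : ∀ t, Measurable (gstar t) := by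
    intro t
    haveI := hκ t
    have h1 : StronglyMeasurable fun p : X × (Set.Icc a b) => ψ p.2 :=
      hψ.stronglyMeasurable.comp_measurable measurable_snd
    have h2 : StronglyMeasurable fun x => ∫ y, ψ y ∂((κ t) x) :=
      MeasureTheory.StronglyMeasurable.integral_kernel_prod_right
        (κ := κ t) (f := fun _ y => ψ y) h1
    have h3 : gstar t = fun x => ∫ y, ψ y ∂((κ t) x) := funext fun x => hg t x
    rw [h3]
    exact h2.measurable
  -- uniform bound on ψ
  obtain ⟨yM, -, hyM⟩ := (isCompact_univ : IsCompact (Set.univ : Set (Set.Icc a b))).exists_isMaxOn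
    Set.univ_nonempty hψ.norm.continuousOn
  set M : ℝ := ‖ψ yM‖ with hMdef
  have hM : ∀ y, ‖ψ y‖ ≤ M := fun y => hyM (Set.mem_univ y)
  have hM0 : 0 ≤ M := norm_nonneg _
  -- integrability of ψ
  have hψint : ∀ (t : Fin T) (x : X), Integrable ψ ((κ t) x) := by
    intro t x
    haveI := hκ t
    exact (integrable_const M).mono' hψ.stronglyMeasurable.aestronglyMeasurable
      (Filter.Eventually.of_forall hM)
  -- bound on g*
  have hgbd : ∀ (t : Fin T) (x : X), ‖gstar t x‖ ≤ M := by
    intro t x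
    haveI := hκ t
    rw [hg t x]
    have := norm_integral_le_of_norm_le_const (μ := (κ t) x) (f := ψ) (C := M)
      (Filter.Eventually.of_forall hM)
    simpa using this
  -- key inner-integral identity
  have hkey : ∀ (t : Fin T) (x : X) (z : Set.Icc a b),
      ∫ y, ℓ z y ∂((κ t) x) = (inner ℝ (ψ z) (V (gstar t x)) : ℝ) := by
    intro t x z
    haveI := hκ t
    have h1 : ∀ y, ℓ z y = ((innerSL ℝ (ψ z)).comp V) (ψ y) := by
      intro y
      rw [hℓ]
      simp
    calc ∫ y, ℓ z y ∂((κ t) x)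
        = ∫ y, ((innerSL ℝ (ψ z)).comp V) (ψ y) ∂((κ t) x) := by simp_rw [h1]
      _ = ((innerSL ℝ (ψ z)).comp V) (∫ y, ψ y ∂((κ t) x)) :=
          ContinuousLinearMap.integral_comp_comm _ (hψint t x)
      _ = (inner ℝ (ψ z) (V (gstar t x)) : ℝ) := by rw [hg t x]; simp
  -- the pointwise objective
  set Φ : X → (Fin T → Set.Icc a b) → ℝ :=
    fun x c => ∑ t, (inner ℝ (ψ (c t)) (V (gstar t x)) : ℝ) with hΦdef
  have hΦc : ∀ x, Continuous (Φ x) := by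
    intro x
    apply continuous_finset_sum
    intro t _
    exact Continuous.inner (hψ.comp (continuous_apply t)) continuous_const
  have hΦm : ∀ p, Measurable fun x => Φ x p := by
    intro p
    apply Finset.measurable_sum
    intro t _
    exact Measurable.inner measurable_const (V.continuous.measurable.comp (hgmeas t))
  have hbd : ∀ (z : Set.Icc a b) (t : Fin T) (x : X),
      |(inner ℝ (ψ z) (V (gstar t x)) : ℝ)| ≤ M * (‖V‖ * M) := by
    intro z t x
    calc |(inner ℝ (ψ z) (V (gstar t x)) : ℝ)| ≤ ‖ψ z‖ * ‖V (gstar t x)‖ :=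
          abs_real_inner_le_norm _ _
      _ ≤ M * (‖V‖ * M) := by
          apply mul_le_mul (hM _) _ (norm_nonneg _) hM0
          exact (V.le_opNorm _).trans
            (mul_le_mul_of_nonneg_left (hgbd t x) (norm_nonneg (V : H →L[ℝ] H)))
  have hintg : ∀ (f : X → Fin T → Set.Icc a b), Measurable f → ∀ t : Fin T,
      Integrable (fun x => (inner ℝ (ψ (f x t)) (V (gstar t x)) : ℝ)) ρ := by
    intro f hf t
    have hmeas : Measurable fun x => (inner ℝ (ψ (f x t)) (V (gstar t x)) : ℝ) :=
      Measurable.inner (hψ.measurable.comp ((measurable_pi_apply t).comp hf))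
        (V.continuous.measurable.comp (hgmeas t))
    refine (integrable_const (M * (‖V‖ * M))).mono' hmeas.aestronglyMeasurable
      (Filter.Eventually.of_forall fun x => ?_)
    simpa [Real.norm_eq_abs] using hbd (f x t) t x
  have hΦint : ∀ (f : X → Fin T → Set.Icc a b), Measurable f →
      Integrable (fun x => Φ x (f x)) ρ := by
    intro f hf
    simp only [hΦdef]
    exact integrable_finset_sum _ fun t _ => hintg f hf t
  have hEeq : ∀ (f : X → Fin T → Set.Icc a b), Measurable f →
      E f = (1 / (T : ℝ)) * ∫ x, Φ x (f x) ∂ρ := by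
    intro f hf
    rw [hE f]
    congr 1
    calc ∑ t, ∫ x, ∫ y, ℓ (f x t) y ∂((κ t) x) ∂ρ
        = ∑ t, ∫ x, (inner ℝ (ψ (f x t)) (V (gstar t x)) : ℝ) ∂ρ :=
          Finset.sum_congr rfl fun t _ => integral_congr_ae
            (Filter.Eventually.of_forall fun x => hkey t x (f x t))
      _ = ∫ x, ∑ t, (inner ℝ (ψ (f x t)) (V (gstar t x)) : ℝ) ∂ρ :=
          (integral_finset_sum _ fun t _ => hintg f hf t).symm
      _ = ∫ x, Φ x (f x) ∂ρ := rfl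
  -- measurable argmin selection on C
  haveI : CompactSpace C := isCompact_iff_compactSpace.mp hCcomp
  haveI : Nonempty C := hCne.to_subtype
  obtain ⟨f0', hf0'm, hf0'opt⟩ := exists_measurable_argmin
    (fun x (q : C) => Φ x q.1) (fun q => hΦm q.1)
    (fun x => (hΦc x).comp continuous_subtype_val)
  set f0 : X → Fin T → Set.Icc a b := fun x => (f0' x : Fin T → Set.Icc a b) with hf0def
  have hf0m : Measurable f0 := measurable_subtype_coe.comp hf0'm
  have hf0mem : ∀ x, f0 x ∈ C := fun x => (f0' x).2
  have hf0opt : ∀ x, ∀ c ∈ C, Φ x (f0 x) ≤ Φ x c := fun x c hc => hf0'opt x ⟨c, hc⟩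
  have hTpos : (0 : ℝ) < 1 / (T : ℝ) := by
    have : (0 : ℝ) < (T : ℝ) := by exact_mod_cast Nat.lt_of_lt_of_le Nat.zero_lt_one hT
    positivity
  constructor
  · refine ⟨f0, hf0m, hf0mem, ?_⟩
    intro f hf hfC
    rw [hEeq f0 hf0m, hEeq f hf]
    apply mul_le_mul_of_nonneg_left _ hTpos.le
    exact integral_mono (hΦint f0 hf0m) (hΦint f hf) fun x => hf0opt x (f x) (hfC x)
  · intro fstar hfm hfC hopt
    have h1 : E fstar ≤ E f0 := hopt f0 hf0m hf0mem
    rw [hEeq fstar hfm, hEeq f0 hf0m] at h1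
    have h2 : ∫ x, Φ x (fstar x) ∂ρ ≤ ∫ x, Φ x (f0 x) ∂ρ :=
      le_of_mul_le_mul_left h1 hTpos
    have h3 : ∀ x, Φ x (f0 x) ≤ Φ x (fstar x) := fun x => hf0opt x _ (hfC x)
    have hGint : Integrable (fun x => Φ x (fstar x) - Φ x (f0 x)) ρ :=
      (hΦint _ hfm).sub (hΦint _ hf0m)
    have hInt0 : ∫ x, (Φ x (fstar x) - Φ x (f0 x)) ∂ρ = 0 := by
      have hnn : 0 ≤ ∫ x, (Φ x (fstar x) - Φ x (f0 x)) ∂ρ :=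
        integral_nonneg fun x => sub_nonneg.2 (h3 x)
      have hle : ∫ x, (Φ x (fstar x) - Φ x (f0 x)) ∂ρ ≤ 0 := by
        rw [integral_sub (hΦint _ hfm) (hΦint _ hf0m)]
        linarith
      linarith
    have hae : (fun x => Φ x (fstar x) - Φ x (f0 x)) =ᵐ[ρ] 0 :=
      (integral_eq_zero_iff_of_nonneg_ae
        (Filter.Eventually.of_forall fun x => sub_nonneg.2 (h3 x)) hGint).1 hInt0
    filter_upwards [hae] with x hx
    intro c hc
    have hxeq : Φ x (fstar x) = Φ x (f0 x) := by
      have : Φ x (fstar x) - Φ x (f0 x) = 0 := hx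
      linarith
    calc ∑ t, (inner ℝ (ψ (fstar x t)) (V (gstar t x)) : ℝ)
        = Φ x (fstar x) := rfl
      _ = Φ x (f0 x) := hxeq
      _ ≤ Φ x c := hf0opt x c hc
end

section
/- (Theorem 4, comparison inequality.) Let ℓ be SELF with representation ℓ(y,y') = ⟨ψ(y), V ψ(y')⟩_H and let V* denote the adjoint of V. Let g*_t(x) = ∫_Y ψ(y) dκ_t(x)(y), let f* : X → C be a measurable function satisfying f*(x) ∈ argmin_{c ∈ C} Σ_t ⟨ψ(c_t), V g*_t(x)⟩_H for ρ-a.e. x (so f* minimizes the expected risk E), let ĝ_1,…,ĝ_T : X → H be measurable with ∫_X ‖ĝ_t(x)‖² dρ(x) < ∞, and let f̂ : X → C be measurable with f̂(x) ∈ argmin_{c ∈ C} Σ_t ⟨ψ(c_t), V ĝ_t(x)⟩_H for ρ-a.e. x. Then E(f̂) − E(f*) ≤ q · sqrt( (1/T) Σ_{t=1}^T ∫_X ‖ĝ_t(x) − g*_t(x)‖²_H dρ(x) ), where q = 2 sup_{c ∈ C} sqrt( (1/T) Σ_{t=1}^T ‖V* ψ(c_t)‖²_H ). -/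
open MeasureTheory ProbabilityTheory

/-- Theorem 4, comparison inequality: the excess multitask risk of the
SELF estimator `f̂` is bounded by `q` times the averaged `L²` distance between the
`ĝₜ` and the conditional means `g*ₜ`. -/
theorem stmt4
    {X : Type*} [MeasurableSpace X] (ρ : Measure X) [IsProbabilityMeasure ρ]
    (a b : ℝ) (hab : a ≤ b)
    {H : Type*} [NormedAddCommGroup H] [InnerProductSpace ℝ H]
    [CompleteSpace H] [SecondCountableTopology H]
    [MeasurableSpace H] [BorelSpace H]
    (ψ : Set.Icc a b → H) (hψ : Continuous ψ)
    (V : H →L[ℝ] H)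
    (ℓ : Set.Icc a b → Set.Icc a b → ℝ)
    (hℓ : ∀ y y', ℓ y y' = (inner ℝ (ψ y) (V (ψ y')) : ℝ))
    (T : ℕ) (hT : 1 ≤ T)
    (κ : Fin T → Kernel X (Set.Icc a b)) (hκ : ∀ t, IsMarkovKernel (κ t))
    (C : Set (Fin T → Set.Icc a b)) (hCne : C.Nonempty) (hCcomp : IsCompact C)
    (E : (X → Fin T → Set.Icc a b) → ℝ)
    (hE : ∀ f, E f = (1 / (T : ℝ)) * ∑ t, ∫ x, ∫ y, ℓ (f x t) y ∂((κ t) x) ∂ρ)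
    (gstar : Fin T → X → H)
    (hgstar : ∀ t x, gstar t x = ∫ y, ψ y ∂((κ t) x))
    (fstar : X → Fin T → Set.Icc a b)
    (hfstarMeas : Measurable fstar) (hfstarC : ∀ x, fstar x ∈ C)
    (hfstarMin : ∀ᵐ x ∂ρ, ∀ c ∈ C,
      ∑ t, (inner ℝ (ψ (fstar x t)) (V (gstar t x)) : ℝ)
        ≤ ∑ t, (inner ℝ (ψ (c t)) (V (gstar t x)) : ℝ))
    (ghat : Fin T → X → H) (hghatMeas : ∀ t, Measurable (ghat t))
    (hghatL2 : ∀ t, Integrable (fun x => ‖ghat t x‖ ^ 2) ρ)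
    (fhat : X → Fin T → Set.Icc a b)
    (hfhatMeas : Measurable fhat) (hfhatC : ∀ x, fhat x ∈ C)
    (hfhatMin : ∀ᵐ x ∂ρ, ∀ c ∈ C,
      ∑ t, (inner ℝ (ψ (fhat x t)) (V (ghat t x)) : ℝ)
        ≤ ∑ t, (inner ℝ (ψ (c t)) (V (ghat t x)) : ℝ))
    (q : ℝ)
    (hq : q = 2 * sSup ((fun c : Fin T → Set.Icc a b =>
        Real.sqrt ((1 / (T : ℝ)) *
          ∑ t, ‖(ContinuousLinearMap.adjoint V) (ψ (c t))‖ ^ 2)) '' C)) :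
    E fhat - E fstar
      ≤ q * Real.sqrt ((1 / (T : ℝ)) * ∑ t, ∫ x, ‖ghat t x - gstar t x‖ ^ 2 ∂ρ) := by
  classical
  have hTpos : (0:ℝ) < T := by exact_mod_cast hT
  haveI hYne : Nonempty (Set.Icc a b) := (Set.nonempty_Icc.2 hab).to_subtype
  -- a uniform bound on ψ
  obtain ⟨M, hM⟩ : ∃ M : ℝ, ∀ y, ‖ψ y‖ ≤ M := by
    obtain ⟨M, hM⟩ := (isCompact_range hψ.norm).bddAbove
    exact ⟨M, fun y => hM ⟨y, rfl⟩⟩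
  have hM0 : 0 ≤ M := le_trans (norm_nonneg _) (hM (Classical.arbitrary _))
  -- integrability of ψ against each kernel measure
  have hψint : ∀ t x, Integrable ψ ((κ t) x) := by
    intro t x
    haveI := hκ t
    exact (integrable_const M).mono' hψ.stronglyMeasurable.aestronglyMeasurable
      (Filter.Eventually.of_forall hM)
  -- measurability of gstar
  have hgstarMeas : ∀ t, Measurable (gstar t) := by
    intro t
    haveI := hκ t
    have h1 : StronglyMeasurable (fun p : X × Set.Icc a b => ψ p.2) :=
      hψ.stronglyMeasurable.comp_measurable measurable_snd
    have h2 := h1.integral_kernel_prod_right' (κ := κ t)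
    have h3 : gstar t = fun x => ∫ y, ψ y ∂(κ t) x := funext (hgstar t)
    rw [h3]
    exact h2.measurable
  -- boundedness of gstar
  have hgstarBound : ∀ t x, ‖gstar t x‖ ≤ M := by
    intro t x
    haveI := hκ t
    rw [hgstar]
    calc ‖∫ y, ψ y ∂(κ t) x‖ ≤ M * (((κ t) x) Set.univ).toReal :=
          norm_integral_le_of_norm_le_const (Filter.Eventually.of_forall hM)
      _ = M := by simp
  -- the inner integral identity
  have hinner_int : ∀ (u : H) (t : Fin T) (x : X),
      ∫ y, (inner ℝ u (V (ψ y)) : ℝ) ∂(κ t) x = (inner ℝ u (V (gstar t x)) : ℝ) := by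
    intro u t x
    haveI := hκ t
    rw [hgstar, ← ContinuousLinearMap.integral_comp_comm V (hψint t x),
      ← integral_inner (V.integrable_comp (hψint t x)) u]
  -- rewriting the risk
  have hEeq : ∀ f : X → Fin T → Set.Icc a b,
      E f = (1 / (T : ℝ)) * ∑ t, ∫ x, (inner ℝ (ψ (f x t)) (V (gstar t x)) : ℝ) ∂ρ := by
    intro f
    rw [hE]
    congr 1
    refine Finset.sum_congr rfl fun t _ => ?_
    refine integral_congr_ae (Filter.Eventually.of_forall fun x => ?_)
    simp_rw [hℓ]
    exact hinner_int _ t x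
  -- measurability and integrability of the pointwise risks
  have hφmeas : ∀ (f : X → Fin T → Set.Icc a b), Measurable f → ∀ t : Fin T,
      Measurable fun x => (inner ℝ (ψ (f x t)) (V (gstar t x)) : ℝ) := by
    intro f hf t
    exact Measurable.inner (hψ.measurable.comp ((measurable_pi_apply t).comp hf))
      (V.continuous.measurable.comp (hgstarMeas t))
  have hφint : ∀ (f : X → Fin T → Set.Icc a b), Measurable f → ∀ t : Fin T,
      Integrable (fun x => (inner ℝ (ψ (f x t)) (V (gstar t x)) : ℝ)) ρ := by
    intro f hf t
    refine (integrable_const (M * (‖V‖ * M))).mono'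
      (hφmeas f hf t).aestronglyMeasurable (Filter.Eventually.of_forall fun x => ?_)
    calc ‖(inner ℝ (ψ (f x t)) (V (gstar t x)) : ℝ)‖
        ≤ ‖ψ (f x t)‖ * ‖V (gstar t x)‖ := norm_inner_le_norm _ _
      _ ≤ M * (‖V‖ * M) := by
          refine mul_le_mul (hM _) ?_ (norm_nonneg _) hM0
          exact le_trans (V.le_opNorm _)
            (mul_le_mul_of_nonneg_left (hgstarBound t x) (norm_nonneg _))
  -- the pointwise excess risk
  set D : X → ℝ := fun x => ∑ t, ((inner ℝ (ψ (fhat x t)) (V (gstar t x)) : ℝ)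
      - (inner ℝ (ψ (fstar x t)) (V (gstar t x)) : ℝ)) with hD
  have hDint : Integrable D ρ :=
    integrable_finset_sum _ fun t _ =>
      (hφint fhat hfhatMeas t).sub (hφint fstar hfstarMeas t)
  have hdiff : E fhat - E fstar = (1 / (T : ℝ)) * ∫ x, D x ∂ρ := by
    rw [hEeq fhat, hEeq fstar, ← mul_sub]
    congr 1
    calc ∑ t, ∫ x, (inner ℝ (ψ (fhat x t)) (V (gstar t x)) : ℝ) ∂ρ
          - ∑ t, ∫ x, (inner ℝ (ψ (fstar x t)) (V (gstar t x)) : ℝ) ∂ρ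
        = ∑ t, (∫ x, (inner ℝ (ψ (fhat x t)) (V (gstar t x)) : ℝ) ∂ρ
            - ∫ x, (inner ℝ (ψ (fstar x t)) (V (gstar t x)) : ℝ) ∂ρ) :=
          (Finset.sum_sub_distrib _ _).symm
      _ = ∑ t, ∫ x, ((inner ℝ (ψ (fhat x t)) (V (gstar t x)) : ℝ)
            - (inner ℝ (ψ (fstar x t)) (V (gstar t x)) : ℝ)) ∂ρ :=
          Finset.sum_congr rfl fun t _ =>
            (integral_sub (hφint fhat hfhatMeas t) (hφint fstar hfstarMeas t)).symm
      _ = ∫ x, D x ∂ρ :=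
          (integral_finset_sum _ fun t _ =>
            (hφint fhat hfhatMeas t).sub (hφint fstar hfstarMeas t)).symm
  -- the supremum S
  set S : ℝ := sSup ((fun c : Fin T → Set.Icc a b =>
      Real.sqrt ((1 / (T : ℝ)) *
        ∑ t, ‖(ContinuousLinearMap.adjoint V) (ψ (c t))‖ ^ 2)) '' C) with hSdef
  have hcont : Continuous (fun c : Fin T → Set.Icc a b =>
      Real.sqrt ((1 / (T : ℝ)) *
        ∑ t, ‖(ContinuousLinearMap.adjoint V) (ψ (c t))‖ ^ 2)) := by
    apply Continuous.sqrt
    apply Continuous.mul continuous_const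
    apply continuous_finset_sum
    intro t _
    exact (((ContinuousLinearMap.adjoint V).continuous.comp
      (hψ.comp (continuous_apply t))).norm).pow 2
  have hbdd : BddAbove ((fun c : Fin T → Set.Icc a b =>
      Real.sqrt ((1 / (T : ℝ)) *
        ∑ t, ‖(ContinuousLinearMap.adjoint V) (ψ (c t))‖ ^ 2)) '' C) :=
    (hCcomp.image hcont).bddAbove
  have hSle : ∀ c ∈ C, Real.sqrt ((1 / (T : ℝ)) *
      ∑ t, ‖(ContinuousLinearMap.adjoint V) (ψ (c t))‖ ^ 2) ≤ S :=
    fun c hc => le_csSup hbdd ⟨c, hc, rfl⟩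
  have hS0 : 0 ≤ S := le_trans (Real.sqrt_nonneg _) (hSle _ hCne.choose_spec)
  have hq0 : 0 ≤ q := by rw [hq]; positivity
  have hCS : ∀ c ∈ C, Real.sqrt
      (∑ t, ‖(ContinuousLinearMap.adjoint V) (ψ (c t))‖ ^ 2) ≤ Real.sqrt T * S := by
    intro c hc
    have h1 : (∑ t, ‖(ContinuousLinearMap.adjoint V) (ψ (c t))‖ ^ 2)
        = (T : ℝ) * ((1 / (T : ℝ)) * ∑ t, ‖(ContinuousLinearMap.adjoint V) (ψ (c t))‖ ^ 2) := by
      field_simp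
    rw [h1, Real.sqrt_mul hTpos.le]
    exact mul_le_mul_of_nonneg_left (hSle c hc) (Real.sqrt_nonneg _)
  -- the squared distance
  set F : X → ℝ := fun x => ∑ t, ‖ghat t x - gstar t x‖ ^ 2 with hF
  have hFnonneg : ∀ x, 0 ≤ F x := fun x => Finset.sum_nonneg fun t _ => sq_nonneg _
  have hFmeas : Measurable F :=
    Finset.measurable_sum _ fun t _ => ((hghatMeas t).sub (hgstarMeas t)).norm.pow_const 2
  have hFtint : ∀ t : Fin T, Integrable (fun x => ‖ghat t x - gstar t x‖ ^ 2) ρ := by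
    intro t
    refine (((hghatL2 t).const_mul 2).add (integrable_const (2 * M ^ 2))).mono'
      (((hghatMeas t).sub (hgstarMeas t)).norm.pow_const 2).aestronglyMeasurable
      (Filter.Eventually.of_forall fun x => ?_)
    have h1 : ‖ghat t x - gstar t x‖ ≤ ‖ghat t x‖ + M :=
      (norm_sub_le _ _).trans (by gcongr; exact hgstarBound t x)
    have h2 : (0:ℝ) ≤ ‖ghat t x‖ := norm_nonneg _
    have h3 : (0:ℝ) ≤ ‖ghat t x - gstar t x‖ := norm_nonneg _
    simp only [Pi.add_apply]
    rw [Real.norm_eq_abs, abs_of_nonneg (by positivity)]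
    nlinarith [sq_nonneg (‖ghat t x‖ - M), mul_self_le_mul_self h3 h1]
  have hFint : Integrable F ρ := integrable_finset_sum _ fun t _ => hFtint t
  have hGmeas : Measurable fun x => Real.sqrt (F x) :=
    Real.continuous_sqrt.measurable.comp hFmeas
  have hsqrtFint : Integrable (fun x => Real.sqrt (F x)) ρ := by
    refine ((integrable_const 1).add hFint).mono' hGmeas.aestronglyMeasurable
      (Filter.Eventually.of_forall fun x => ?_)
    simp only [Pi.add_apply]
    rw [Real.norm_eq_abs, abs_of_nonneg (Real.sqrt_nonneg _)]
    nlinarith [Real.sq_sqrt (hFnonneg x), Real.sqrt_nonneg (F x),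
      sq_nonneg (Real.sqrt (F x) - 1)]
  -- the pointwise a.e. bound
  have haebound : ∀ᵐ x ∂ρ, D x ≤ (q * Real.sqrt T) * Real.sqrt (F x) := by
    filter_upwards [hfhatMin] with x h2
    have key1 : ∑ t, (inner ℝ (ψ (fhat x t)) (V (ghat t x)) : ℝ)
        ≤ ∑ t, (inner ℝ (ψ (fstar x t)) (V (ghat t x)) : ℝ) := h2 _ (hfstarC x)
    have step1 : D x ≤ ∑ t, ((inner ℝ (ψ (fhat x t)) (V (gstar t x - ghat t x)) : ℝ)
        + (inner ℝ (ψ (fstar x t)) (V (ghat t x - gstar t x)) : ℝ)) := by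
      have expand : ∀ t : Fin T,
          (inner ℝ (ψ (fhat x t)) (V (gstar t x)) : ℝ)
            - (inner ℝ (ψ (fstar x t)) (V (gstar t x)) : ℝ)
          = ((inner ℝ (ψ (fhat x t)) (V (ghat t x)) : ℝ)
              - (inner ℝ (ψ (fstar x t)) (V (ghat t x)) : ℝ))
            + ((inner ℝ (ψ (fhat x t)) (V (gstar t x - ghat t x)) : ℝ)
              + (inner ℝ (ψ (fstar x t)) (V (ghat t x - gstar t x)) : ℝ)) := by
        intro t
        simp only [map_sub, inner_sub_right]
        ring
      calc D x = (∑ t, ((inner ℝ (ψ (fhat x t)) (V (ghat t x)) : ℝ)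
              - (inner ℝ (ψ (fstar x t)) (V (ghat t x)) : ℝ)))
            + ∑ t, ((inner ℝ (ψ (fhat x t)) (V (gstar t x - ghat t x)) : ℝ)
              + (inner ℝ (ψ (fstar x t)) (V (ghat t x - gstar t x)) : ℝ)) := by
            rw [hD, ← Finset.sum_add_distrib]
            exact Finset.sum_congr rfl fun t _ => expand t
        _ ≤ 0 + ∑ t, ((inner ℝ (ψ (fhat x t)) (V (gstar t x - ghat t x)) : ℝ)
              + (inner ℝ (ψ (fstar x t)) (V (ghat t x - gstar t x)) : ℝ)) := by
            refine add_le_add ?_ le_rfl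
            rw [Finset.sum_sub_distrib]
            linarith [key1]
        _ = ∑ t, ((inner ℝ (ψ (fhat x t)) (V (gstar t x - ghat t x)) : ℝ)
              + (inner ℝ (ψ (fstar x t)) (V (ghat t x - gstar t x)) : ℝ)) := zero_add _
    have step2 : ∀ t : Fin T,
        (inner ℝ (ψ (fhat x t)) (V (gstar t x - ghat t x)) : ℝ)
          + (inner ℝ (ψ (fstar x t)) (V (ghat t x - gstar t x)) : ℝ)
        ≤ ‖(ContinuousLinearMap.adjoint V) (ψ (fhat x t))‖ * ‖ghat t x - gstar t x‖
          + ‖(ContinuousLinearMap.adjoint V) (ψ (fstar x t))‖ * ‖ghat t x - gstar t x‖ := by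
      intro t
      have e1 : (inner ℝ (ψ (fhat x t)) (V (gstar t x - ghat t x)) : ℝ)
          = (inner ℝ ((ContinuousLinearMap.adjoint V) (ψ (fhat x t))) (gstar t x - ghat t x) : ℝ) :=
        (ContinuousLinearMap.adjoint_inner_left V _ _).symm
      have e2 : (inner ℝ (ψ (fstar x t)) (V (ghat t x - gstar t x)) : ℝ)
          = (inner ℝ ((ContinuousLinearMap.adjoint V) (ψ (fstar x t))) (ghat t x - gstar t x) : ℝ) :=
        (ContinuousLinearMap.adjoint_inner_left V _ _).symm
      have i1 := real_inner_le_norm ((ContinuousLinearMap.adjoint V) (ψ (fhat x t)))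
        (gstar t x - ghat t x)
      have i2 := real_inner_le_norm ((ContinuousLinearMap.adjoint V) (ψ (fstar x t)))
        (ghat t x - gstar t x)
      rw [e1, e2]
      rw [norm_sub_rev (gstar t x) (ghat t x)] at i1
      exact add_le_add i1 i2
    have c1 := Real.sum_mul_le_sqrt_mul_sqrt Finset.univ
      (fun t => ‖(ContinuousLinearMap.adjoint V) (ψ (fhat x t))‖)
      (fun t => ‖ghat t x - gstar t x‖)
    have c2 := Real.sum_mul_le_sqrt_mul_sqrt Finset.univ
      (fun t => ‖(ContinuousLinearMap.adjoint V) (ψ (fstar x t))‖)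
      (fun t => ‖ghat t x - gstar t x‖)
    have b1 := hCS _ (hfhatC x)
    have b2 := hCS _ (hfstarC x)
    have hsqF : Real.sqrt (∑ t, ‖ghat t x - gstar t x‖ ^ 2) = Real.sqrt (F x) := by rw [hF]
    rw [hsqF] at c1 c2
    have hsF0 : 0 ≤ Real.sqrt (F x) := Real.sqrt_nonneg _
    calc D x ≤ _ := step1
      _ ≤ ∑ t, (‖(ContinuousLinearMap.adjoint V) (ψ (fhat x t))‖ * ‖ghat t x - gstar t x‖
            + ‖(ContinuousLinearMap.adjoint V) (ψ (fstar x t))‖ * ‖ghat t x - gstar t x‖) :=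
          Finset.sum_le_sum fun t _ => step2 t
      _ = (∑ t, ‖(ContinuousLinearMap.adjoint V) (ψ (fhat x t))‖ * ‖ghat t x - gstar t x‖)
            + ∑ t, ‖(ContinuousLinearMap.adjoint V) (ψ (fstar x t))‖ * ‖ghat t x - gstar t x‖ :=
          Finset.sum_add_distrib
      _ ≤ Real.sqrt (∑ t, ‖(ContinuousLinearMap.adjoint V) (ψ (fhat x t))‖ ^ 2)
            * Real.sqrt (F x)
          + Real.sqrt (∑ t, ‖(ContinuousLinearMap.adjoint V) (ψ (fstar x t))‖ ^ 2)
            * Real.sqrt (F x) := add_le_add c1 c2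
      _ ≤ (Real.sqrt T * S) * Real.sqrt (F x) + (Real.sqrt T * S) * Real.sqrt (F x) := by
          exact add_le_add (mul_le_mul_of_nonneg_right b1 hsF0)
            (mul_le_mul_of_nonneg_right b2 hsF0)
      _ = (q * Real.sqrt T) * Real.sqrt (F x) := by rw [hq]; ring
  -- Jensen: ∫ sqrt F ≤ sqrt (∫ F)
  have hGsq : Integrable (fun x => (Real.sqrt (F x)) ^ 2) ρ :=
    hFint.congr (Filter.Eventually.of_forall fun x => (Real.sq_sqrt (hFnonneg x)).symm)
  have hmem : MemLp (fun x => Real.sqrt (F x)) 2 ρ :=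
    (memLp_two_iff_integrable_sq hGmeas.aestronglyMeasurable).2 hGsq
  have hvar := variance_nonneg (fun x => Real.sqrt (F x)) ρ
  rw [variance_eq_sub hmem] at hvar
  have hjensen : ∫ x, Real.sqrt (F x) ∂ρ ≤ Real.sqrt (∫ x, F x ∂ρ) := by
    have hsq : (∫ x, Real.sqrt (F x) ∂ρ) ^ 2 ≤ ∫ x, F x ∂ρ := by
      have heq : (∫ x, ((fun x => Real.sqrt (F x)) ^ 2) x ∂ρ) = ∫ x, F x ∂ρ :=
        integral_congr_ae (Filter.Eventually.of_forall fun x => by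
          simp [Real.sq_sqrt (hFnonneg x)])
      have : (0:ℝ) ≤ (∫ x, ((fun x => Real.sqrt (F x)) ^ 2) x ∂ρ)
          - (∫ x, Real.sqrt (F x) ∂ρ) ^ 2 := hvar
      linarith [heq ▸ this]
    calc ∫ x, Real.sqrt (F x) ∂ρ
        = Real.sqrt ((∫ x, Real.sqrt (F x) ∂ρ) ^ 2) :=
          (Real.sqrt_sq (integral_nonneg fun x => Real.sqrt_nonneg _)).symm
      _ ≤ Real.sqrt (∫ x, F x ∂ρ) := Real.sqrt_le_sqrt hsq
  have hintF : ∫ x, F x ∂ρ = ∑ t, ∫ x, ‖ghat t x - gstar t x‖ ^ 2 ∂ρ :=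
    integral_finset_sum _ fun t _ => hFtint t
  set Z : ℝ := ∑ t, ∫ x, ‖ghat t x - gstar t x‖ ^ 2 ∂ρ with hZ
  have hZ0 : 0 ≤ Z :=
    Finset.sum_nonneg fun t _ => integral_nonneg fun x => sq_nonneg _
  have main : ∫ x, D x ∂ρ ≤ (q * Real.sqrt T) * Real.sqrt Z := by
    calc ∫ x, D x ∂ρ ≤ ∫ x, (q * Real.sqrt T) * Real.sqrt (F x) ∂ρ :=
          integral_mono_ae hDint (hsqrtFint.const_mul _) haebound
      _ = (q * Real.sqrt T) * ∫ x, Real.sqrt (F x) ∂ρ := integral_const_mul _ _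
      _ ≤ (q * Real.sqrt T) * Real.sqrt (∫ x, F x ∂ρ) :=
          mul_le_mul_of_nonneg_left hjensen (mul_nonneg hq0 (Real.sqrt_nonneg _))
      _ = (q * Real.sqrt T) * Real.sqrt Z := by rw [hintF]
  rw [hdiff]
  have hfinal : (1 / (T : ℝ)) * ((q * Real.sqrt T) * Real.sqrt Z)
      = q * Real.sqrt ((1 / (T : ℝ)) * Z) := by
    rw [Real.sqrt_mul (by positivity) Z]
    have hsT : (0:ℝ) < Real.sqrt T := Real.sqrt_pos.2 hTpos
    have hmul : Real.sqrt T * Real.sqrt T = (T : ℝ) := Real.mul_self_sqrt hTpos.le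
    have h2 : Real.sqrt (1 / (T : ℝ)) = 1 / Real.sqrt T := by
      rw [one_div, one_div, Real.sqrt_inv]
    rw [h2]
    field_simp
    linear_combination (q * Real.sqrt Z) * hmul
  calc (1 / (T : ℝ)) * ∫ x, D x ∂ρ
      ≤ (1 / (T : ℝ)) * ((q * Real.sqrt T) * Real.sqrt Z) :=
        mul_le_mul_of_nonneg_left main (by positivity)
    _ = q * Real.sqrt ((1 / (T : ℝ)) * Z) := hfinal
end

section
/- (Example 3, perturbed loss.) Let C ⊆ ℝ^T be nonempty, n ≥ 1, α_1,…,α_n ∈ ℝ with a = Σ_i α_i > 0, y_1,…,y_n ∈ ℝ^T, b = Σ_i α_i y_i, w = b/a, and let f₀ ∈ C be a Euclidean projection of w onto C. Let δ > 0 and define J(c, r) = Σ_{i=1}^n α_i ( ‖c + r − y_i‖² + δ‖r‖² ) for c ∈ C and r ∈ ℝ^T. Then (f₀, r*) with r* = (w − f₀)/(1 + δ) minimizes J over C × ℝ^T: J(f₀, r*) ≤ J(c, r) for all c ∈ C and r ∈ ℝ^T. Equivalently, writing μ = 1/δ, the minimizing prediction is f̂_μ = f₀ + (w − f₀)·μ/(1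 + μ). -/
open RealInnerProductSpace

lemma stmt14_aux {T n : ℕ} (α : Fin n → ℝ) (a : ℝ) (ha : a = ∑ i, α i)
    (hapos : 0 < a)
    (y : Fin n → EuclideanSpace ℝ (Fin T))
    (b : EuclideanSpace ℝ (Fin T)) (hb : b = ∑ i, α i • y i)
    (w : EuclideanSpace ℝ (Fin T)) (hw : w = a⁻¹ • b)
    (x : EuclideanSpace ℝ (Fin T)) :
    ∑ i, α i * ‖x - y i‖ ^ 2
      = a * ‖x - w‖ ^ 2 + (∑ i, α i * ‖y i‖ ^ 2 - a * ‖w‖ ^ 2) := by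
  have hbw : b = a • w := by
    rw [hw, smul_smul, mul_inv_cancel₀ (ne_of_gt hapos), one_smul]
  have hinner : ∑ i, α i * ⟪x, y i⟫ = a * ⟪x, w⟫ := by
    have : ⟪x, b⟫ = a * ⟪x, w⟫ := by rw [hbw, real_inner_smul_right]
    rw [← this, hb, inner_sum]
    exact Finset.sum_congr rfl fun i _ => by rw [real_inner_smul_right]
  have h1 : ∑ i, α i * ‖x - y i‖ ^ 2
      = (∑ i, α i) * ‖x‖ ^ 2 - 2 * ∑ i, α i * ⟪x, y i⟫
        + ∑ i, α i * ‖y i‖ ^ 2 := by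
    rw [Finset.sum_mul, Finset.mul_sum, ← Finset.sum_sub_distrib,
      ← Finset.sum_add_distrib]
    refine Finset.sum_congr rfl fun i _ => ?_
    rw [@norm_sub_sq_real]; ring
  have h2 : ‖x - w‖ ^ 2 = ‖x‖ ^ 2 - 2 * ⟪x, w⟫ + ‖w‖ ^ 2 := norm_sub_sq_real x w
  rw [h1, h2, ← ha, hinner]; ring

/-- Example 3, perturbed loss: with `a = ∑ αᵢ > 0`, `w = b/a` and `f₀`
a Euclidean projection of `w` onto `C`, the pair `(f₀, r*)` with
`r* = (w − f₀)/(1 + δ)` minimizes `J(c,r) = ∑ᵢ αᵢ(‖c + r − yᵢ‖² + δ‖r‖²)` over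
`C × ℝ^T`; equivalently, with `μ = 1/δ`, the minimizing prediction is
`f̂_μ = f₀ + (w − f₀)·μ/(1 + μ)`. -/
theorem stmt14 (T : ℕ)
    (C : Set (EuclideanSpace ℝ (Fin T))) (hC : C.Nonempty)
    (n : ℕ) (hn : 1 ≤ n)
    (α : Fin n → ℝ) (a : ℝ) (ha : a = ∑ i, α i) (hapos : 0 < a)
    (y : Fin n → EuclideanSpace ℝ (Fin T))
    (b : EuclideanSpace ℝ (Fin T)) (hb : b = ∑ i, α i • y i)
    (w : EuclideanSpace ℝ (Fin T)) (hw : w = a⁻¹ • b)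
    (f₀ : EuclideanSpace ℝ (Fin T)) (hf₀ : f₀ ∈ C)
    (hproj : ∀ c ∈ C, ‖f₀ - w‖ ≤ ‖c - w‖)
    (δ : ℝ) (hδ : 0 < δ)
    (J : EuclideanSpace ℝ (Fin T) → EuclideanSpace ℝ (Fin T) → ℝ)
    (hJ : ∀ c r, J c r = ∑ i, α i * (‖c + r - y i‖ ^ 2 + δ * ‖r‖ ^ 2))
    (rstar : EuclideanSpace ℝ (Fin T))
    (hrstar : rstar = (1 / (1 + δ)) • (w - f₀)) :
    (∀ c ∈ C, ∀ r : EuclideanSpace ℝ (Fin T), J f₀ rstar ≤ J c r) ∧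
    f₀ + rstar = f₀ + ((1 / δ) / (1 + 1 / δ)) • (w - f₀) := by
  have hδ1 : (0:ℝ) < 1 + δ := by linarith
  set K : ℝ := ∑ i, α i * ‖y i‖ ^ 2 - a * ‖w‖ ^ 2 with hK
  -- rewrite J
  have hJ' : ∀ x r : EuclideanSpace ℝ (Fin T),
      J x r = a * ((1 + δ) * ‖r + (1 / (1 + δ)) • (x - w)‖ ^ 2
        + (δ / (1 + δ)) * ‖x - w‖ ^ 2) + K := by
    intro x r
    have hs : ∀ i, α i * (‖x + r - y i‖ ^ 2 + δ * ‖r‖ ^ 2)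
        = α i * ‖x + r - y i‖ ^ 2 + (α i * δ) * ‖r‖ ^ 2 := fun i => by ring
    rw [hJ]
    simp_rw [hs]
    rw [Finset.sum_add_distrib, ← Finset.sum_mul, ← Finset.sum_mul, ← ha,
      stmt14_aux α a ha hapos y b hb w hw (x + r)]
    have key : ‖x + r - w‖ ^ 2 + δ * ‖r‖ ^ 2
        = (1 + δ) * ‖r + (1 / (1 + δ)) • (x - w)‖ ^ 2
          + (δ / (1 + δ)) * ‖x - w‖ ^ 2 := by
      have e1 : x + r - w = r + (x - w) := by abel
      rw [e1, norm_add_sq_real, norm_add_sq_real r ((1 / (1 + δ)) • (x - w)),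
        real_inner_smul_right, norm_smul]
      have : ‖(1:ℝ) / (1 + δ)‖ = 1 / (1 + δ) := by
        rw [Real.norm_eq_abs, abs_of_pos (by positivity)]
      rw [this]
      field_simp
      ring
    simp only [hK]
    linear_combination a * key
  constructor
  · intro c hc r
    rw [hJ' f₀ rstar, hJ' c r]
    have hz : rstar + (1 / (1 + δ)) • (f₀ - w) = 0 := by
      rw [hrstar, ← smul_add]
      simp [sub_add_sub_cancel']
    rw [hz, norm_zero]
    have h1 : ‖f₀ - w‖ ^ 2 ≤ ‖c - w‖ ^ 2 := by
      have := hproj c hc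
      exact pow_le_pow_left₀ (norm_nonneg _) this 2
    have h2 : (0:ℝ) ≤ ‖r + (1 / (1 + δ)) • (c - w)‖ ^ 2 := by positivity
    have hpos : (0:ℝ) < δ / (1 + δ) := by positivity
    have step : (1 + δ) * (0:ℝ) ^ 2 + δ / (1 + δ) * ‖f₀ - w‖ ^ 2
        ≤ (1 + δ) * ‖r + (1 / (1 + δ)) • (c - w)‖ ^ 2 + δ / (1 + δ) * ‖c - w‖ ^ 2 := by
      have k1 := mul_le_mul_of_nonneg_left h1 hpos.le
      have k2 := mul_nonneg hδ1.le h2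
      nlinarith
    exact add_le_add_left (mul_le_mul_of_nonneg_left step hapos.le) K
  · rw [hrstar]
    congr 2
    field_simp
    ring
end
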